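/- arXiv:0910.2032 — 2 statements merged into one kernel-verified Lean document; each statement's English description precedes it below -/
import Mathlib

section
/- Let V be a finite-dimensional inner product space over ℂ, let d : V →ₗ[ℂ] V be a linear map with d ∘ d = 0, and set Δ := d ∘ d† + d† ∘ d. Let u ∈ range d. Then: (a) there is a unique w in the orthogonal complement of ker Δ with Δ w = u; (b) the vector β := d† w satisfies d β = u; (c) β has minimal norm among all solutions β' of d β' = u; and (d) ‖β‖² = re ⟪u, w⟫. -/
open scoped ComplexInnerProductSpace

/-!
The Laplacian `Δ = d d† + d† d` is symmetric with `ker Δ = ker d ⊓ ker d†`, so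
`range Δ = (ker Δ)ᗮ ⊇ (ker d†)ᗮ = range d`, and `Δ` is injective on `(ker Δ)ᗮ`.
If `Δ w = u ∈ range d`, then `d† d w = u - d d† w` lies in `range d ⊆ ker d` (as `d² = 0`) and in
`range d† = (ker d)ᗮ`, hence vanishes, and `d (d† w) = u`. Finally `β = d† w ∈ (ker d)ᗮ` is the
orthogonal projection onto `(ker d)ᗮ` of every solution `β'` of `d β' = u`, so it has least norm,
and `‖β‖² = re ⟪d d† w, w⟫ = re ⟪u, w⟫`.
-/

open LinearMap Submodule

namespace Submodule

variable {𝕜 E : Type*} [RCLike 𝕜] [NormedAddCommGroup E] [InnerProductSpace 𝕜 E]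

theorem norm_le_of_mem_orthogonal_of_sub_mem (K : Submodule 𝕜 E) [K.HasOrthogonalProjection]
    {x y : E} (hx : x ∈ Kᗮ) (hyx : y - x ∈ K) : ‖x‖ ≤ ‖y‖ := by
  rw [← eq_starProjection_of_mem_orthogonal hx (K.le_orthogonal_orthogonal hyx)]
  exact Kᗮ.norm_starProjection_apply_le y

end Submodule

namespace LinearMap

variable {𝕜 E F : Type*} [RCLike 𝕜] [NormedAddCommGroup E] [InnerProductSpace 𝕜 E]
  [FiniteDimensional 𝕜 E]

theorem existsUnique_mem_orthogonal_ker_apply_eq {G : Type*} [AddCommGroup G] [Module 𝕜 G]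
    (T : E →ₗ[𝕜] G) {u : G} (hu : u ∈ range T) : ∃! w, w ∈ (ker T)ᗮ ∧ T w = u := by
  obtain ⟨w₀, rfl⟩ := hu
  have hker {w : E} : w₀ - w ∈ ker T ↔ T w = T w₀ := by
    rw [mem_ker, map_sub, sub_eq_zero, eq_comm]
  refine ⟨(ker T)ᗮ.starProjection w₀, ⟨starProjection_apply_mem _ _, hker.mp ?_⟩, ?_⟩
  · simpa only [orthogonal_orthogonal] using (ker T)ᗮ.sub_starProjection_mem_orthogonal w₀
  · rintro w ⟨hw, hTw⟩
    exact (eq_starProjection_of_mem_orthogonal hw ((ker T).le_orthogonal_orthogonal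
      (hker.mpr hTw))).symm

theorem IsSymmetric.orthogonal_ker {T : E →ₗ[𝕜] E} (hT : T.IsSymmetric) :
    (ker T)ᗮ = range T := by
  rw [← hT.orthogonal_range, orthogonal_orthogonal]

variable [NormedAddCommGroup F] [InnerProductSpace 𝕜 F] [FiniteDimensional 𝕜 F]

theorem adjoint_apply_mem_orthogonal_ker (T : E →ₗ[𝕜] F) (w : F) :
    adjoint T w ∈ (ker T)ᗮ := by
  rw [orthogonal_ker]
  exact mem_range_self _ w

theorem norm_adjoint_apply_le_of_apply_eq (T : E →ₗ[𝕜] F) {w : F} {β : E}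
    (hβ : T β = T (adjoint T w)) : ‖adjoint T w‖ ≤ ‖β‖ :=
  (ker T).norm_le_of_mem_orthogonal_of_sub_mem (adjoint_apply_mem_orthogonal_ker T w)
    (by rw [mem_ker, map_sub, hβ, sub_self])

theorem norm_adjoint_apply_sq (T : E →ₗ[𝕜] F) (w : F) :
    ‖adjoint T w‖ ^ 2 = RCLike.re (inner 𝕜 (T (adjoint T w)) w) := by
  rw [← adjoint_inner_right, ← inner_self_eq_norm_sq (𝕜 := 𝕜)]

noncomputable def laplacian (d : E →ₗ[𝕜] E) : E →ₗ[𝕜] E :=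
  d ∘ₗ adjoint d + adjoint d ∘ₗ d

variable (d : E →ₗ[𝕜] E)

theorem laplacian_apply (x : E) : laplacian d x = d (adjoint d x) + adjoint d (d x) := rfl

theorem isSymmetric_laplacian : (laplacian d).IsSymmetric :=
  (isSymmetric_self_comp_adjoint d).add (isSymmetric_adjoint_comp_self d)

theorem re_inner_laplacian_self (x : E) :
    RCLike.re (inner 𝕜 (laplacian d x) x) = ‖adjoint d x‖ ^ 2 + ‖d x‖ ^ 2 := by
  rw [laplacian_apply, inner_add_left, map_add, ← adjoint_inner_right d (adjoint d x) x,
    adjoint_inner_left d x (d x), ← inner_self_eq_norm_sq (𝕜 := 𝕜),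
    ← inner_self_eq_norm_sq (𝕜 := 𝕜)]

theorem ker_laplacian : ker (laplacian d) = ker d ⊓ ker (adjoint d) := by
  ext x
  simp only [mem_inf, mem_ker]
  constructor
  · intro hx
    have h : ‖adjoint d x‖ ^ 2 + ‖d x‖ ^ 2 = 0 := by
      rw [← re_inner_laplacian_self, hx, inner_zero_left, map_zero]
    simpa [and_comm] using (add_eq_zero_iff_of_nonneg (sq_nonneg _) (sq_nonneg _)).mp h
  · rintro ⟨hdx, hd'x⟩
    rw [laplacian_apply, hdx, hd'x, map_zero, map_zero, add_zero]

theorem range_le_range_laplacian : range d ≤ range (laplacian d) := by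
  rw [← (isSymmetric_laplacian d).orthogonal_ker, ker_laplacian, ← adjoint_adjoint d,
    ← orthogonal_ker, adjoint_adjoint]
  exact orthogonal_le inf_le_right

theorem apply_adjoint_apply_eq_laplacian_apply (hd : d ∘ₗ d = 0) {w : E}
    (hw : laplacian d w ∈ range d) : d (adjoint d w) = laplacian d w := by
  have hmem : adjoint d (d w) ∈ ker d ⊓ (ker d)ᗮ := by
    refine ⟨range_le_ker_iff.mpr hd ?_, adjoint_apply_mem_orthogonal_ker d (d w)⟩
    rw [show adjoint d (d w) = laplacian d w - d (adjoint d w) by rw [laplacian_apply]; abel]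
    exact sub_mem hw (mem_range_self d _)
  rw [inf_orthogonal_eq_bot, mem_bot] at hmem
  rw [laplacian_apply, hmem, add_zero]

end LinearMap

/-- Minimal-norm `d`-potential of a `d`-exact vector via the Green operator of
`Δ = d d† + d† d`: there is a unique `w ⟂ ker Δ` with `Δ w = u`; `β := d† w`
solves `d β = u`, has minimal norm among all solutions, and `‖β‖² = re ⟪u, w⟫`. -/
theorem stmt1 {V : Type*} [NormedAddCommGroup V] [InnerProductSpace ℂ V]
    [FiniteDimensional ℂ V] (d : V →ₗ[ℂ] V) (hd : d ∘ₗ d = 0)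
    (Δ : V →ₗ[ℂ] V) (hΔ : Δ = d ∘ₗ LinearMap.adjoint d + LinearMap.adjoint d ∘ₗ d)
    (u : V) (hu : u ∈ LinearMap.range d) :
    (∃! w : V, w ∈ (LinearMap.ker Δ)ᗮ ∧ Δ w = u) ∧
    ∀ w : V, w ∈ (LinearMap.ker Δ)ᗮ → Δ w = u →
      d (LinearMap.adjoint d w) = u ∧
      (∀ β' : V, d β' = u → ‖LinearMap.adjoint d w‖ ≤ ‖β'‖) ∧
      ‖LinearMap.adjoint d w‖ ^ 2 = (⟪u, w⟫).re := by
  obtain rfl : Δ = laplacian d := hΔ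
  refine ⟨existsUnique_mem_orthogonal_ker_apply_eq _ (range_le_range_laplacian d hu),
    fun w _ hw => ?_⟩
  have hβ : d (adjoint d w) = u := by
    rw [apply_adjoint_apply_eq_laplacian_apply d hd (hw ▸ hu), hw]
  refine ⟨hβ, fun β' hβ' => norm_adjoint_apply_le_of_apply_eq d (hβ'.trans hβ.symm), ?_⟩
  rw [norm_adjoint_apply_sq, hβ]
  rfl
end

section
/- Let V be a finite-dimensional inner product space over ℂ and let B be a symmetric endomorphism of V with re ⟪B x, x⟫ > 0 for every nonzero x (so B is positive definite and invertible). Let ε > 0, μ > 0, and let f ∈ V with ‖f‖ = 1. Assume that for every eigenvalue λ of B such that the orthogonal projection of f onto the λ-eigenspace of B is nonzero, one has μ ≥ (1+ε) λ. Then 1/μ ≤ (1/(1+ε)) · re ⟪B⁻¹ f, f⟫. -/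
/-!
Write `f = B g` and expand `g` in an orthonormal eigenbasis `(bᵢ)` of `B`, whose eigenvalues `λᵢ`
are positive. Then `‖f‖² = Σ λᵢ² ‖⟪bᵢ, g⟫‖²` and `re ⟪g, f⟫ = Σ λᵢ ‖⟪bᵢ, g⟫‖²`. Whenever
`⟪bᵢ, g⟫ ≠ 0`, also `⟪bᵢ, f⟫ = λᵢ ⟪bᵢ, g⟫ ≠ 0`, so `f` has a nonzero component in the
`λᵢ`-eigenspace and `(1 + ε) λᵢ ≤ μ`; comparing the two sums termwise gives
`(1 + ε) / μ ≤ re ⟪g, f⟫`.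
-/

open scoped InnerProductSpace ComplexInnerProductSpace

theorem Submodule.starProjection_ne_zero_of_inner_ne_zero {𝕜 E : Type*} [RCLike 𝕜]
    [NormedAddCommGroup E] [InnerProductSpace 𝕜 E] {K : Submodule 𝕜 E}
    [K.HasOrthogonalProjection] {u v : E} (hu : u ∈ K) (huv : ⟪u, v⟫_𝕜 ≠ 0) :
    K.starProjection v ≠ 0 := by
  intro hv
  apply huv
  rw [← K.starProjection_eq_self_iff.mpr hu, inner_starProjection_left_eq_right, hv,
    inner_zero_right]

namespace LinearMap

variable {𝕜 E : Type*} [RCLike 𝕜] [NormedAddCommGroup E] [InnerProductSpace 𝕜 E]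
  {T : E →ₗ[𝕜] E}

theorem injective_of_re_inner_apply_self_pos
    (hpos : ∀ x : E, x ≠ 0 → 0 < RCLike.re ⟪T x, x⟫_𝕜) : Function.Injective T := by
  refine (injective_iff_map_eq_zero T).2 fun x hx => ?_
  by_contra hx0
  simpa [hx] using hpos x hx0

namespace IsSymmetric

variable [FiniteDimensional 𝕜 E]

section Eigenbasis

variable {n : ℕ} (hT : T.IsSymmetric) (hn : Module.finrank 𝕜 E = n)

theorem eigenvalues_pos (hpos : ∀ x : E, x ≠ 0 → 0 < RCLike.re ⟪T x, x⟫_𝕜) (i : Fin n) :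
    0 < hT.eigenvalues hn i := by
  simpa [inner_smul_left] using hpos _ ((hT.eigenvectorBasis hn).orthonormal.ne_zero i)

theorem inner_eigenvectorBasis_apply (v : E) (i : Fin n) :
    ⟪hT.eigenvectorBasis hn i, T v⟫_𝕜 =
      hT.eigenvalues hn i * ⟪hT.eigenvectorBasis hn i, v⟫_𝕜 := by
  simpa only [OrthonormalBasis.repr_apply_apply] using hT.eigenvectorBasis_apply_self_apply hn v i

theorem norm_apply_sq_eq_sum (v : E) :
    ‖T v‖ ^ 2 = ∑ i, hT.eigenvalues hn i ^ 2 * ‖⟪hT.eigenvectorBasis hn i, v⟫_𝕜‖ ^ 2 := by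
  simp [← (hT.eigenvectorBasis hn).sum_sq_norm_inner_right (T v),
    hT.inner_eigenvectorBasis_apply hn, mul_pow]

theorem re_inner_apply_self_eq_sum (v : E) :
    RCLike.re ⟪v, T v⟫_𝕜 = ∑ i, hT.eigenvalues hn i * ‖⟪hT.eigenvectorBasis hn i, v⟫_𝕜‖ ^ 2 := by
  rw [← (hT.eigenvectorBasis hn).sum_inner_mul_inner, map_sum]
  refine Finset.sum_congr rfl fun i _ => ?_
  rw [hT.inner_eigenvectorBasis_apply hn, ← inner_conj_symm, mul_left_comm, RCLike.conj_mul]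
  norm_cast

end Eigenbasis

theorem mul_norm_apply_sq_le_re_inner_apply_self (hT : T.IsSymmetric)
    (hpos : ∀ x : E, x ≠ 0 → 0 < RCLike.re ⟪T x, x⟫_𝕜) {c : ℝ} (v : E)
    (hc : ∀ μ : ℝ, (Module.End.eigenspace T (μ : 𝕜)).starProjection (T v) ≠ 0 → c * μ ≤ 1) :
    c * ‖T v‖ ^ 2 ≤ RCLike.re ⟪v, T v⟫_𝕜 := by
  rw [hT.norm_apply_sq_eq_sum rfl, hT.re_inner_apply_self_eq_sum rfl, Finset.mul_sum]
  set b := hT.eigenvectorBasis rfl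
  set lam := hT.eigenvalues rfl
  refine Finset.sum_le_sum fun i _ => ?_
  obtain hvi | hvi := eq_or_ne ⟪b i, v⟫_𝕜 0
  · simp [hvi]
  have hlam : 0 < lam i := hT.eigenvalues_pos rfl hpos i
  have hTvi : ⟪b i, T v⟫_𝕜 ≠ 0 := by
    rw [hT.inner_eigenvectorBasis_apply]
    exact mul_ne_zero (RCLike.ofReal_ne_zero.mpr hlam.ne') hvi
  have hproj := Submodule.starProjection_ne_zero_of_inner_ne_zero
    (hT.hasEigenvector_eigenvectorBasis rfl i).1 hTvi
  calc c * (lam i ^ 2 * ‖⟪b i, v⟫_𝕜‖ ^ 2) = c * lam i * (lam i * ‖⟪b i, v⟫_𝕜‖ ^ 2) := by ring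
    _ ≤ 1 * (lam i * ‖⟪b i, v⟫_𝕜‖ ^ 2) :=
      mul_le_mul_of_nonneg_right (hc _ hproj) (mul_nonneg hlam.le (sq_nonneg _))
    _ = lam i * ‖⟪b i, v⟫_𝕜‖ ^ 2 := one_mul _

end IsSymmetric

end LinearMap

/-- For a positive-definite symmetric endomorphism `B`, a unit vector `f` whose nonzero
eigencomponents correspond to eigenvalues `λ` with `μ ≥ (1+ε)λ` satisfies
`1/μ ≤ (1/(1+ε)) · re ⟪B⁻¹ f, f⟫`. -/
theorem stmt8 {V : Type*} [NormedAddCommGroup V] [InnerProductSpace ℂ V]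
    [FiniteDimensional ℂ V] (B : V →ₗ[ℂ] V) (hB : B.IsSymmetric)
    (hBpos : ∀ x : V, x ≠ 0 → 0 < (⟪B x, x⟫).re)
    (ε μ : ℝ) (hε : 0 < ε) (hμ : 0 < μ) (f : V) (hf : ‖f‖ = 1)
    (heig : ∀ lam : ℝ,
      (↑(Submodule.orthogonalProjection (Module.End.eigenspace B (lam : ℂ)) f) : V) ≠ 0 →
      (1 + ε) * lam ≤ μ) :
    (∃ g : V, B g = f) ∧
    ∀ g : V, B g = f → 1 / μ ≤ (1 / (1 + ε)) * (⟪g, f⟫).re := by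
  have hsurj := LinearMap.injective_iff_surjective.mp (B.injective_of_re_inner_apply_self_pos hBpos)
  refine ⟨hsurj f, ?_⟩
  rintro g rfl
  have key : (1 + ε) / μ * ‖B g‖ ^ 2 ≤ (⟪g, B g⟫).re :=
    hB.mul_norm_apply_sq_le_re_inner_apply_self hBpos g fun lam hproj => by
      rw [div_mul_eq_mul_div, div_le_one hμ]
      exact heig lam hproj
  rw [hf, one_pow, mul_one] at key
  rw [one_div_mul_eq_div, le_div_iff₀ (by linarith), div_mul_eq_mul_div, one_mul]
  exact key
end
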